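/- Let φ be a flow on a metric space M, let N ⊆ M, let J be a metric space, let y : J → M be continuous, and let p* ∈ J. For p ∈ J define τ(p) ∈ [0, ∞] as the Lebesgue measure of {t ∈ [0, ∞) : φ_t(y(p)) ∈ N}. Suppose φ_t(y(p*)) converges as t → ∞ to a point a lying in the interior of N. Then τ(p*) = ∞, and τ(p) → ∞ as p → p*; that is, for every K > 0 there is a neighborhood V of p* in J such that τ(p) ≥ K for all p ∈ V. -/
import Mathlib


/-- Lemma 8.2 (measure-theoretic formulation): if the trajectory at `p*`
converges to a point in the interior of `N`, then the time spent in `N` is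
infinite at `p*` and diverges to infinity as `p → p*`. -/
theorem time_in_neighborhood_diverges
    {M : Type*} [MetricSpace M] (φ : Flow ℝ M) (N : Set M)
    {J : Type*} [MetricSpace J] (y : J → M) (hy : Continuous y) (pstar : J)
    (τ : J → ENNReal)
    (hτ : ∀ p, τ p = MeasureTheory.volume {t : ℝ | 0 ≤ t ∧ φ t (y p) ∈ N})
    (a : M) (ha : a ∈ interior N)
    (hconv : Filter.Tendsto (fun t : ℝ => φ t (y pstar)) Filter.atTop (nhds a)) :
    τ pstar = ⊤ ∧
    ∀ K : ℝ, 0 < K → ∃ V ∈ nhds pstar, ∀ p ∈ V, ENNReal.ofReal K ≤ τ p := by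
  have hU : interior N ∈ nhds a := isOpen_interior.mem_nhds ha
  have hev : ∀ᶠ t in Filter.atTop, φ t (y pstar) ∈ interior N := hconv.eventually hU
  obtain ⟨T, hT⟩ := Filter.eventually_atTop.mp hev
  set T' : ℝ := max T 0 with hT'
  have hT'mem : ∀ t, T' ≤ t → φ t (y pstar) ∈ interior N := fun t ht =>
    hT t (le_trans (le_max_left _ _) ht)
  constructor
  · rw [hτ]
    rw [← top_le_iff, ← Real.volume_Ici (a := T')]
    apply MeasureTheory.measure_mono
    intro t ht
    exact ⟨le_trans (le_max_right _ _) ht, interior_subset (hT'mem t ht)⟩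
  · intro K hK
    -- tube lemma around {pstar} × [T', T'+K]
    have hf : Continuous fun q : ℝ × J => φ q.1 (y q.2) :=
      φ.continuous continuous_fst (hy.comp continuous_snd)
    have hsub : (Set.Icc T' (T' + K)) ×ˢ ({pstar} : Set J) ⊆
        (fun q : ℝ × J => φ q.1 (y q.2)) ⁻¹' interior N := by
      rintro ⟨t, p⟩ ⟨ht, hp⟩
      simp only [Set.mem_singleton_iff] at hp
      subst hp
      exact hT'mem t ht.1
    obtain ⟨u, v, huo, hvo, hsu, htv, huv⟩ := generalized_tube_lemma isCompact_Icc
      isCompact_singleton (isOpen_interior.preimage hf) hsub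
    refine ⟨v, hvo.mem_nhds (htv rfl), fun p hp => ?_⟩
    rw [hτ]
    have : Set.Icc T' (T' + K) ⊆ {t : ℝ | 0 ≤ t ∧ φ t (y p) ∈ N} := by
      intro t ht
      refine ⟨le_trans (le_max_right _ _) ht.1, interior_subset ?_⟩
      exact huv (Set.mk_mem_prod (hsu ht) hp)
    calc ENNReal.ofReal K = MeasureTheory.volume (Set.Icc T' (T' + K)) := by
          rw [Real.volume_Icc]; ring_nf
      _ ≤ _ := MeasureTheory.measure_mono this
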